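/- For every natural number p, eventually in x (as x → ∞): x^(p/(p+1)) < x^(log(log x) / log(log(x+1))) < x. -/

import Mathlib

open Filter Asymptotics

/-! Write `a = log (log x)` and `b = log (log (x + 1))`. Clearly `a < b`, and applying
`log (y + 1) ≤ log y + 1` (for `y ≥ 1`) twice gives `b ≤ a + 1`. Hence `a / b < 1`, and once
`a > p` also `p * b ≤ p * a + p < (p + 1) * a`, i.e. `p / (p + 1) < a / b`. Since `x > 1`, the
power `x ^ s` is strictly increasing in `s`. -/

namespace Real

theorem log_add_one_le_log_add_inv {x : ℝ} (hx : 0 < x) : log (x + 1) ≤ log x + x⁻¹ := by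
  have h := log_le_sub_one_of_pos (div_pos (by linarith) hx : 0 < (x + 1) / x)
  rw [log_div (by linarith) hx.ne', add_div, div_self hx.ne', one_div] at h
  linarith

theorem log_add_one_le_log_add_one {x : ℝ} (hx : 1 ≤ x) : log (x + 1) ≤ log x + 1 :=
  (log_add_one_le_log_add_inv (by linarith)).trans (by gcongr; exact inv_le_one_of_one_le₀ hx)

theorem log_log_add_one_le {x : ℝ} (hx : exp 1 ≤ x) :
    log (log (x + 1)) ≤ log (log x) + 1 := by
  have hx1 : 1 ≤ x := (one_le_exp zero_le_one).trans hx
  have hlog : 1 ≤ log x := (le_log_iff_exp_le (by linarith)).mpr hx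
  calc log (log (x + 1)) ≤ log (log x + 1) :=
        log_le_log (log_pos (by linarith))
          (log_add_one_le_log_add_one hx1)
    _ ≤ log (log x) + 1 := log_add_one_le_log_add_one hlog

theorem log_log_lt_log_log_add_one {x : ℝ} (hx : 1 < x) : log (log x) < log (log (x + 1)) :=
  log_lt_log (log_pos hx) (log_lt_log (by linarith) (by linarith))

end Real

theorem div_add_one_lt_div_of_le_add_one {p a b : ℝ} (hp : 0 ≤ p) (hpa : p < a) (hb : 0 < b)
    (hba : b ≤ a + 1) : p / (p + 1) < a / b := by
  rw [div_lt_div_iff₀ (by linarith) hb]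
  nlinarith

theorem stmt18 (p : ℕ) :
    ∀ᶠ x : ℝ in atTop,
      x ^ ((p : ℝ) / (p + 1)) <
          x ^ (Real.log (Real.log x) / Real.log (Real.log (x + 1))) ∧
        x ^ (Real.log (Real.log x) / Real.log (Real.log (x + 1))) < x := by
  have hloglog : Tendsto (fun x : ℝ => Real.log (Real.log x)) atTop atTop :=
    Real.tendsto_log_atTop.comp Real.tendsto_log_atTop
  filter_upwards [hloglog.eventually_gt_atTop (p : ℝ), eventually_ge_atTop (Real.exp 1)]
    with x hp hx
  have hx1 : 1 < x := (Real.one_lt_exp_iff.mpr one_pos).trans_le hx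
  have hlt := Real.log_log_lt_log_log_add_one hx1
  have hpos : 0 < Real.log (Real.log (x + 1)) := by linarith [(Nat.cast_nonneg p : (0 : ℝ) ≤ p)]
  have hlow := div_add_one_lt_div_of_le_add_one (Nat.cast_nonneg p) hp hpos
    (Real.log_log_add_one_le hx)
  have hhigh := (div_lt_one hpos).mpr hlt
  exact ⟨Real.rpow_lt_rpow_of_exponent_lt hx1 hlow,
    by simpa using Real.rpow_lt_rpow_of_exponent_lt hx1 hhigh⟩
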